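/- Let ρ: A → U(V) be an irreducible representation of a compact normal subgroup A ⊴ G with stabilizer G_[ρ]. There exists a unique group homomorphism Υ: G_[ρ] → PU(V) such that Υ(a) = p(ρ(a)) for all a ∈ A, where p: U(V) → PU(V) is the quotient map, and such that for each g ∈ G_[ρ], any lift u ∈ U(V) of Υ(g) satisfies ρ(g⁻¹ a g) = u⁻¹ ρ(a) u for all a ∈ A. -/

import Mathlib

noncomputable section

variable {G : Type*} [Group G] {V : Type*} [NormedAddCommGroup V] [InnerProductSpace ℂ V]

/-- If `A` is normal and `a ∈ A`, then `g⁻¹ * a * g ∈ A`. -/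
theorem conjMem (A : Subgroup G) (hA : A.Normal) (g : G) (a : A) :
    g⁻¹ * (a : G) * g ∈ A := by
  simpa using hA.conj_mem (a : G) a.2 g⁻¹

/-- The conjugate representation `(g · ρ)(a) = ρ(g⁻¹ a g)`. -/
def conjRep (A : Subgroup G) (hA : A.Normal) (g : G) (ρ : A →* (V ≃ₗᵢ[ℂ] V)) :
    A →* (V ≃ₗᵢ[ℂ] V) where
  toFun a := ρ ⟨g⁻¹ * (a : G) * g, conjMem A hA g a⟩
  map_one' := by
    have h : (⟨g⁻¹ * ((1 : A) : G) * g, conjMem A hA g 1⟩ : A) = 1 := by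
      ext; simp
    show ρ ⟨g⁻¹ * ((1 : A) : G) * g, conjMem A hA g 1⟩ = 1
    rw [h, map_one]
  map_mul' a b := by
    have key : (⟨g⁻¹ * ((a * b : A) : G) * g, conjMem A hA g (a * b)⟩ : A)
        = ⟨g⁻¹ * (a : G) * g, conjMem A hA g a⟩ * ⟨g⁻¹ * (b : G) * g, conjMem A hA g b⟩ := by
      ext; push_cast; group
    show ρ ⟨g⁻¹ * ((a * b : A) : G) * g, conjMem A hA g (a * b)⟩ = _
    rw [key, map_mul]

/-- A unitary representation is irreducible if its only invariant subspaces are `⊥` and `⊤`. -/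
def IsIrreducibleRep {H : Type*} [Group H] (ρ : H →* (V ≃ₗᵢ[ℂ] V)) : Prop :=
  ∀ W : Submodule ℂ V, (∀ h : H, ∀ v ∈ W, ρ h v ∈ W) → W = ⊥ ∨ W = ⊤

/-- Unitary equivalence of two unitary representations on the same space. -/
def UnitaryEquivRep {H : Type*} [Group H] (ρ σ : H →* (V ≃ₗᵢ[ℂ] V)) : Prop :=
  ∃ U : V ≃ₗᵢ[ℂ] V, ∀ h : H, σ h = U * ρ h * U⁻¹

/-- The stabilizer `G_[ρ]` of the isomorphism class of `ρ` under conjugation. -/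
def stab (A : Subgroup G) (hA : A.Normal) (ρ : A →* (V ≃ₗᵢ[ℂ] V)) : Subgroup G where
  carrier := {g : G | ∃ u : V ≃ₗᵢ[ℂ] V,
    ∀ a : A, ρ ⟨g⁻¹ * (a : G) * g, conjMem A hA g a⟩ = u⁻¹ * ρ a * u}
  one_mem' := by
    refine ⟨1, fun a => ?_⟩
    have h : (⟨(1 : G)⁻¹ * (a : G) * 1, conjMem A hA 1 a⟩ : A) = a := by ext; simp
    rw [h]; simp
  mul_mem' := by
    rintro g h ⟨u, hu⟩ ⟨w, hw⟩
    refine ⟨u * w, fun a => ?_⟩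
    have key : (⟨(g * h)⁻¹ * (a : G) * (g * h), conjMem A hA (g * h) a⟩ : A)
        = ⟨h⁻¹ * ((⟨g⁻¹ * (a : G) * g, conjMem A hA g a⟩ : A) : G) * h,
            conjMem A hA h _⟩ := by
      ext; push_cast; group
    rw [key, hw, hu]
    simp [mul_assoc]
  inv_mem' := by
    rintro g ⟨u, hu⟩
    refine ⟨u⁻¹, fun a => ?_⟩
    have h2 := hu ⟨g⁻¹⁻¹ * (a : G) * g⁻¹, conjMem A hA g⁻¹ a⟩
    have key : (⟨g⁻¹ * ((⟨g⁻¹⁻¹ * (a : G) * g⁻¹, conjMem A hA g⁻¹ a⟩ : A) : G) * g,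
        conjMem A hA g _⟩ : A) = a := by ext; push_cast; group
    rw [key] at h2
    have := congrArg (fun z => u * z * u⁻¹) h2
    simpa [mul_assoc] using this.symm

/-- The group `G̃_[ρ]`, realized inside `G × U(V)` as the pairs `(g, u)` such that
conjugation of `ρ` by `g` equals conjugation by `u`; equivalently `Υ(g) = p(u)`. -/
def gtil (A : Subgroup G) (hA : A.Normal) (ρ : A →* (V ≃ₗᵢ[ℂ] V)) :
    Subgroup (G × (V ≃ₗᵢ[ℂ] V)) where
  carrier := {x | ∀ a : A,
    ρ ⟨x.1⁻¹ * (a : G) * x.1, conjMem A hA x.1 a⟩ = x.2⁻¹ * ρ a * x.2}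
  one_mem' := by
    intro a
    have h : (⟨((1 : G × (V ≃ₗᵢ[ℂ] V)).1)⁻¹ * (a : G) * (1 : G × (V ≃ₗᵢ[ℂ] V)).1,
        conjMem A hA _ a⟩ : A) = a := by ext; simp
    rw [h]; simp
  mul_mem' := by
    rintro ⟨g, u⟩ ⟨h, w⟩ hgu hhw a
    have key : (⟨(g * h)⁻¹ * (a : G) * (g * h), conjMem A hA (g * h) a⟩ : A)
        = ⟨h⁻¹ * ((⟨g⁻¹ * (a : G) * g, conjMem A hA g a⟩ : A) : G) * h,
            conjMem A hA h _⟩ := by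
      ext; push_cast; group
    show ρ ⟨(g * h)⁻¹ * (a : G) * (g * h), conjMem A hA (g * h) a⟩
        = (u * w)⁻¹ * ρ a * (u * w)
    rw [key, hhw ⟨g⁻¹ * (a : G) * g, conjMem A hA g a⟩, hgu a]
    simp [mul_assoc]
  inv_mem' := by
    rintro ⟨g, u⟩ hgu a
    have h2 := hgu ⟨g⁻¹⁻¹ * (a : G) * g⁻¹, conjMem A hA g⁻¹ a⟩
    have key : (⟨g⁻¹ * ((⟨g⁻¹⁻¹ * (a : G) * g⁻¹, conjMem A hA g⁻¹ a⟩ : A) : G) * g,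
        conjMem A hA g _⟩ : A) = a := by ext; push_cast; group
    rw [key] at h2
    show ρ ⟨g⁻¹⁻¹ * (a : G) * g⁻¹, conjMem A hA g⁻¹ a⟩ = u⁻¹⁻¹ * ρ a * u⁻¹
    have := congrArg (fun z => u * z * u⁻¹) h2
    simpa [mul_assoc] using this.symm

/-- Multiplication by a unit scalar as a linear isometry equivalence. -/
def scalarIsom (c : ℂ) (hc : ‖c‖ = 1) : V ≃ₗᵢ[ℂ] V :=
  { toFun := fun v => c • v
    invFun := fun v => c⁻¹ • v
    map_add' := fun v w => smul_add c v w
    map_smul' := fun r v => smul_comm c r v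
    left_inv := fun v => by
      have hc0 : c ≠ 0 := by intro h; rw [h] at hc; simp at hc
      simp [smul_smul, inv_mul_cancel₀ hc0]
    right_inv := fun v => by
      have hc0 : c ≠ 0 := by intro h; rw [h] at hc; simp at hc
      simp [smul_smul, mul_inv_cancel₀ hc0]
    norm_map' := fun v => by simp [norm_smul, hc] }

/-- The subgroup of scalar unitaries `S¹ ⊆ U(V)`. -/
def ScalarSub (V : Type*) [NormedAddCommGroup V] [InnerProductSpace ℂ V] :
    Subgroup (V ≃ₗᵢ[ℂ] V) where
  carrier := {u | ∃ c : ℂ, ∀ v, u v = c • v}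
  one_mem' := ⟨1, fun v => by simp⟩
  mul_mem' := by
    rintro u w ⟨c, hc⟩ ⟨d, hd⟩
    refine ⟨c * d, fun v => ?_⟩
    show u (w v) = (c * d) • v
    rw [hd, hc, smul_smul]
  inv_mem' := by
    rintro u ⟨c, hc⟩
    rcases eq_or_ne c 0 with h0 | h0
    · refine ⟨1, fun v => ?_⟩
      have hz : ∀ w : V, w = 0 := fun w => by
        have h1 : u w = u 0 := by rw [hc w, h0, zero_smul, map_zero]
        simpa using u.injective h1
      rw [hz (u⁻¹ v), hz v, smul_zero]
    · refine ⟨c⁻¹, fun v => ?_⟩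
      apply u.injective
      have huu : u (u⁻¹ v) = v := by
        have h1 : (u * u⁻¹) v = v := by rw [mul_inv_cancel]; rfl
        simpa using h1
      rw [huu, map_smul, hc, smul_smul, inv_mul_cancel₀ h0, one_smul]

instance scalarSub_normal (V : Type*) [NormedAddCommGroup V] [InnerProductSpace ℂ V] :
    (ScalarSub V).Normal := by
  constructor
  rintro u ⟨c, hc⟩ g
  refine ⟨c, fun v => ?_⟩
  show g (u (g⁻¹ v)) = c • v
  rw [hc, map_smul]
  congr 1
  have h1 : (g * g⁻¹) v = v := by rw [mul_inv_cancel]; rfl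
  simpa using h1

/-!
The pairs `(g, u)` for which conjugating `ρ` by `g` equals conjugating it by `u` form the
subgroup `gtil A hA ρ` of `G × U(V)`, whose image in `G` is `G_[ρ]`. Its elements over `g = 1`
are the unitaries commuting with `ρ`, which are scalars by Schur's lemma, so the unitaries paired
with a given `g ∈ G_[ρ]` form a single coset of `S¹`. `Υ(g)` must be that coset, and this choice
is multiplicative because `gtil A hA ρ` is a subgroup.
-/

theorem mem_scalarSub_of_commute [FiniteDimensional ℂ V] {H : Type*} [Group H]
    {ρ : H →* (V ≃ₗᵢ[ℂ] V)} (hρ : IsIrreducibleRep ρ) {T : V ≃ₗᵢ[ℂ] V}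
    (hT : ∀ h, Commute T (ρ h)) : T ∈ ScalarSub V := by
  rcases subsingleton_or_nontrivial V with _ | _
  · exact ⟨1, fun v => Subsingleton.elim _ _⟩
  set f : Module.End ℂ V := (T.toLinearEquiv : V →ₗ[ℂ] V)
  obtain ⟨c, hc⟩ := Module.End.exists_eigenvalue f
  have invariant : ∀ h, ∀ v ∈ f.eigenspace c, ρ h v ∈ f.eigenspace c := by
    intro h v hv
    rw [Module.End.mem_eigenspace_iff] at hv ⊢
    change (T * ρ h) v = c • ρ h v
    rw [(hT h).eq]
    exact (congrArg (ρ h) hv).trans (map_smul _ _ _)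
  have top : f.eigenspace c = ⊤ := (hρ _ invariant).resolve_left hc
  exact ⟨c, fun v => Module.End.mem_eigenspace_iff.mp (top ▸ Submodule.mem_top)⟩

theorem scalarSub_le_center : ScalarSub V ≤ Subgroup.center (V ≃ₗᵢ[ℂ] V) := by
  rintro s ⟨c, hc⟩
  refine Subgroup.mem_center_iff.mpr fun T => LinearIsometryEquiv.ext fun v => ?_
  simp only [LinearIsometryEquiv.coe_mul, Function.comp_apply, hc, map_smul]

section Implementers

variable {A : Subgroup G} {hA : A.Normal} {ρ : A →* (V ≃ₗᵢ[ℂ] V)}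

theorem mem_stab_iff_exists_mem_gtil {g : G} : g ∈ stab A hA ρ ↔ ∃ u, (g, u) ∈ gtil A hA ρ :=
  Iff.rfl

theorem mk_one_mem_gtil_iff {u : V ≃ₗᵢ[ℂ] V} : (1, u) ∈ gtil A hA ρ ↔ ∀ a, Commute u (ρ a) := by
  have conj_one : ∀ a : A, (⟨(1 : G)⁻¹ * a * 1, conjMem A hA 1 a⟩ : A) = a := fun a => by
    ext; simp
  change (∀ a : A, ρ ⟨(1 : G)⁻¹ * a * 1, _⟩ = u⁻¹ * ρ a * u) ↔ _
  simp only [conj_one]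
  refine forall_congr' fun a => ?_
  rw [eq_comm, mul_assoc, inv_mul_eq_iff_eq_mul, Commute, SemiconjBy, eq_comm]

theorem mk_mem_gtil_of_mem {a : G} (ha : a ∈ A) : (a, ρ ⟨a, ha⟩) ∈ gtil A hA ρ := by
  intro b
  have conj : (⟨a⁻¹ * b * a, conjMem A hA a b⟩ : A) = (⟨a, ha⟩ : A)⁻¹ * b * ⟨a, ha⟩ := rfl
  rw [conj, map_mul, map_mul, map_inv]

theorem mem_gtil_of_mk_eq {g : G} {u w : V ≃ₗᵢ[ℂ] V} (hu : (g, u) ∈ gtil A hA ρ)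
    (h : (QuotientGroup.mk u : _ ⧸ ScalarSub V) = QuotientGroup.mk w) :
    (g, w) ∈ gtil A hA ρ := by
  have scalar : (1, u⁻¹ * w) ∈ gtil A hA ρ :=
    mk_one_mem_gtil_iff.mpr fun a =>
      (Subgroup.mem_center_iff.mp (scalarSub_le_center (QuotientGroup.eq.mp h)) (ρ a)).symm
  simpa using mul_mem hu scalar

theorem mk_eq_mk_of_mem_gtil [FiniteDimensional ℂ V] (hρ : IsIrreducibleRep ρ) {g : G}
    {u w : V ≃ₗᵢ[ℂ] V} (hu : (g, u) ∈ gtil A hA ρ) (hw : (g, w) ∈ gtil A hA ρ) :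
    (QuotientGroup.mk u : _ ⧸ ScalarSub V) = QuotientGroup.mk w := by
  have over_one : (1, u⁻¹ * w) ∈ gtil A hA ρ := by simpa using mul_mem (inv_mem hu) hw
  exact QuotientGroup.eq.mpr (mem_scalarSub_of_commute hρ (mk_one_mem_gtil_iff.mp over_one))

variable (A hA ρ)

def stabLift (g : stab A hA ρ) : V ≃ₗᵢ[ℂ] V :=
  (mem_stab_iff_exists_mem_gtil.mp g.2).choose

theorem stabLift_mem_gtil (g : stab A hA ρ) : ((g : G), stabLift A hA ρ g) ∈ gtil A hA ρ :=
  (mem_stab_iff_exists_mem_gtil.mp g.2).choose_spec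

def projectiveExtension [FiniteDimensional ℂ V] (hρ : IsIrreducibleRep ρ) :
    stab A hA ρ →* (V ≃ₗᵢ[ℂ] V) ⧸ ScalarSub V where
  toFun g := QuotientGroup.mk (stabLift A hA ρ g)
  map_one' := mk_eq_mk_of_mem_gtil hρ (stabLift_mem_gtil A hA ρ 1) (one_mem _)
  map_mul' g h := mk_eq_mk_of_mem_gtil hρ (stabLift_mem_gtil A hA ρ (g * h))
    (mul_mem (stabLift_mem_gtil A hA ρ g) (stabLift_mem_gtil A hA ρ h))

theorem projectiveExtension_apply [FiniteDimensional ℂ V] (hρ : IsIrreducibleRep ρ)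
    (g : stab A hA ρ) :
    projectiveExtension A hA ρ hρ g = QuotientGroup.mk (stabLift A hA ρ g) :=
  rfl

end Implementers

/-- there is a unique homomorphism `Υ : G_[ρ] → PU(V)` such that
`Υ(a) = p(ρ(a))` for `a ∈ A`, where `p : U(V) → PU(V) = U(V)/S¹` is the quotient map,
and such that any unitary lift `u` of `Υ(g)` implements the conjugation of `ρ` by `g`. -/
theorem exists_unique_projective_extension [FiniteDimensional ℂ V]
    (A : Subgroup G) (hA : A.Normal) (ρ : A →* (V ≃ₗᵢ[ℂ] V)) (hρ : IsIrreducibleRep ρ) :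
    ∃! Υ : ↥(stab A hA ρ) →* ((V ≃ₗᵢ[ℂ] V) ⧸ ScalarSub V),
      (∀ (a : G) (ha : a ∈ A) (hs : a ∈ stab A hA ρ),
        Υ ⟨a, hs⟩ = (QuotientGroup.mk (ρ ⟨a, ha⟩) : (V ≃ₗᵢ[ℂ] V) ⧸ ScalarSub V)) ∧
      (∀ (g : ↥(stab A hA ρ)) (u : V ≃ₗᵢ[ℂ] V),
        Υ g = (QuotientGroup.mk u : (V ≃ₗᵢ[ℂ] V) ⧸ ScalarSub V) →
        ∀ a : A, ρ ⟨(g : G)⁻¹ * (a : G) * (g : G), conjMem A hA (g : G) a⟩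
          = u⁻¹ * ρ a * u) := by
  refine ⟨projectiveExtension A hA ρ hρ, ⟨fun a ha hs => ?_, fun g u hu => ?_⟩, ?_⟩
  · exact mk_eq_mk_of_mem_gtil hρ (stabLift_mem_gtil A hA ρ ⟨a, hs⟩) (mk_mem_gtil_of_mem ha)
  · exact mem_gtil_of_mk_eq (stabLift_mem_gtil A hA ρ g) hu
  · rintro Υ ⟨-, lift_implements⟩
    ext g
    obtain ⟨u, hu⟩ := QuotientGroup.mk_surjective (Υ g)
    rw [← hu, projectiveExtension_apply]
    exact mk_eq_mk_of_mem_gtil hρ (lift_implements g u hu.symm) (stabLift_mem_gtil A hA ρ g)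

end
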